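/- arXiv:2306.17740 — 6 statements merged into one kernel-verified Lean document; each statement's English description precedes it below -/
import Mathlib

section
/- Balance of angular momentum for a system of point masses coupled by hyperelastic elements: let N nel : ℕ, masses m : Fin N → ℝ, coefficients a : Fin nel → Fin N → ℝ, natural lengths l : Fin nel → ℝ with l i ≠ 0, stresses S : ℝ → (Fin nel → ℝ), and external forces fext : Fin N → ℝ → (Fin 3 → ℝ). Suppose q v : Fin N → ℝ → (Fin 3 → ℝ) are differentiable and satisfy, for all k and t: (q k)'(t) = v k t and m k • (v k)'(t) = fext k t - ∑ i, (S t i * a i k / (l i)^2) • (∑ j, a i j • q j t) (i.e. the elastic force on mass k from element i is -(S_i/2)·∇_{q_k} C̃_i with C̃_i(q) = ‖∑_j a i j • q j‖²/(l i)²). Then the total angular momentum L(t) = ∑ k, (q k t) ×₃ (m k • v k t) is differentiable with derivative L'(t) = ∑ k, (q k t) ×₃ (fext k t): the internal elastic forces produce no net torque. -/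
open Matrix

/-!
Differentiating `L = ∑ₖ qₖ ×₃ (mₖ vₖ)` gives `∑ₖ vₖ ×₃ (mₖ vₖ) + ∑ₖ qₖ ×₃ (mₖ vₖ')`, whose first sum
vanishes. Element `i` pushes mass `k` with `aᵢₖ` times a single vector `cᵢ xᵢ`, where
`xᵢ = ∑ⱼ aᵢⱼ qⱼ`, so its total torque is `cᵢ (∑ₖ aᵢₖ qₖ) ×₃ xᵢ = cᵢ xᵢ ×₃ xᵢ = 0`.
-/

theorem HasDerivAt.cross {f g : ℝ → Fin 3 → ℝ} {f' g' : Fin 3 → ℝ} {t : ℝ}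
    (hf : HasDerivAt f f' t) (hg : HasDerivAt g g' t) :
    HasDerivAt (fun s => f s ⨯₃ g s) (f t ⨯₃ g' + f' ⨯₃ g t) t :=
  (crossProduct (R := ℝ)).toContinuousBilinearMap.hasDerivAt_of_bilinear
    (fun _ => hf) (fun _ => hg)

theorem hasDerivAt_sum_cross_smul {ι : Type*} [Fintype ι] (m : ι → ℝ)
    {q v : ι → ℝ → Fin 3 → ℝ} {a : ι → Fin 3 → ℝ} {t : ℝ}
    (hq : ∀ k, HasDerivAt (q k) (v k t) t) (hv : ∀ k, HasDerivAt (v k) (a k) t) :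
    HasDerivAt (fun s => ∑ k, q k s ⨯₃ (m k • v k s)) (∑ k, q k t ⨯₃ (m k • a k)) t := by
  refine HasDerivAt.fun_sum fun k _ => ((hq k).cross ((hv k).const_smul (m k))).congr_deriv ?_
  simp only [Pi.smul_apply, map_smul, cross_self, smul_zero, add_zero]

theorem sum_cross_sum_mul_smul {ι κ : Type*} [Fintype ι] [Fintype κ]
    (c : ι → ℝ) (a : ι → κ → ℝ) (q : κ → Fin 3 → ℝ) (x : ι → Fin 3 → ℝ) :
    ∑ k, q k ⨯₃ ∑ i, (c i * a i k) • x i = ∑ i, c i • ((∑ k, a i k • q k) ⨯₃ x i) := by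
  simp only [map_sum, map_smul, LinearMap.sum_apply, LinearMap.smul_apply, Finset.smul_sum,
    smul_smul]
  rw [Finset.sum_comm]

theorem sum_cross_sum_mul_smul_sum_smul_eq_zero {ι κ : Type*} [Fintype ι] [Fintype κ]
    (c : ι → ℝ) (a : ι → κ → ℝ) (q : κ → Fin 3 → ℝ) :
    ∑ k, q k ⨯₃ ∑ i, (c i * a i k) • ∑ j, a i j • q j = 0 := by
  simp only [sum_cross_sum_mul_smul, cross_self, smul_zero, Finset.sum_const_zero]

theorem angular_momentum_balance_general (N nel : ℕ)
    (m : Fin N → ℝ) (a : Fin nel → Fin N → ℝ)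
    (l : Fin nel → ℝ)
    (S : ℝ → (Fin nel → ℝ)) (fext : Fin N → ℝ → (Fin 3 → ℝ))
    (q v : Fin N → ℝ → (Fin 3 → ℝ))
    (hq : ∀ k, Differentiable ℝ (q k)) (hv : ∀ k, Differentiable ℝ (v k))
    (hqv : ∀ (k : Fin N) (t : ℝ), deriv (q k) t = v k t)
    (hdyn : ∀ (k : Fin N) (t : ℝ), m k • deriv (v k) t
      = fext k t - ∑ i, (S t i * a i k / (l i) ^ 2) • (∑ j, a i j • q j t)) :
    ∀ t : ℝ, HasDerivAt (fun s => ∑ k, q k s ⨯₃ (m k • v k s))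
      (∑ k, q k t ⨯₃ fext k t) t := by
  intro t
  have hq' (k : Fin N) : HasDerivAt (q k) (v k t) t := hqv k t ▸ (hq k t).hasDerivAt
  convert hasDerivAt_sum_cross_smul m hq' fun k => (hv k t).hasDerivAt using 1
  calc ∑ k, q k t ⨯₃ fext k t
      = ∑ k, q k t ⨯₃ fext k t
          - ∑ k, q k t ⨯₃ ∑ i, (S t i / l i ^ 2 * a i k) • ∑ j, a i j • q j t := by
        rw [sum_cross_sum_mul_smul_sum_smul_eq_zero, sub_zero]
    _ = ∑ k, q k t ⨯₃ (m k • deriv (v k) t) := by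
        simp only [hdyn, map_sub, Finset.sum_sub_distrib, div_mul_eq_mul_div]

/-- Balance of angular momentum for a system of point masses
coupled by hyperelastic elements: if `(q k)' = v k` and
`m k • (v k)' = fext k - ∑ᵢ (Sᵢ aᵢₖ / lᵢ²) • (∑ⱼ aᵢⱼ • qⱼ)` (the elastic force
`-(Sᵢ/2)·∇_{qₖ} C̃ᵢ` with `C̃ᵢ(q) = ‖∑ⱼ aᵢⱼ • qⱼ‖²/lᵢ²`), then the total angular
momentum `L = ∑ₖ qₖ ×₃ (mₖ • vₖ)` has derivative `∑ₖ qₖ ×₃ fextₖ`: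
the internal elastic forces produce no net torque. -/
theorem angular_momentum_balance (N nel : ℕ)
    (m : Fin N → ℝ) (a : Fin nel → Fin N → ℝ)
    (l : Fin nel → ℝ) (hl : ∀ i, l i ≠ 0)
    (S : ℝ → (Fin nel → ℝ)) (fext : Fin N → ℝ → (Fin 3 → ℝ))
    (q v : Fin N → ℝ → (Fin 3 → ℝ))
    (hq : ∀ k, Differentiable ℝ (q k)) (hv : ∀ k, Differentiable ℝ (v k))
    (hqv : ∀ (k : Fin N) (t : ℝ), deriv (q k) t = v k t)
    (hdyn : ∀ (k : Fin N) (t : ℝ), m k • deriv (v k) t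
      = fext k t - ∑ i, (S t i * a i k / (l i) ^ 2) • (∑ j, a i j • q j t)) :
    ∀ t : ℝ, HasDerivAt (fun s => ∑ k, q k s ⨯₃ (m k • v k s))
      (∑ k, q k t ⨯₃ fext k t) t :=
  angular_momentum_balance_general N nel m a l S fext q v hq hv hqv hdyn
end

section
/- Exact preservation of the kinematic condition by the midpoint scheme: let h : ℝ, a : Fin nel → Fin N → ℝ, l : Fin nel → ℝ with l i ≠ 0, and let q v : ℕ → Fin N → (Fin 3 → ℝ) and C : ℕ → (Fin nel → ℝ) satisfy, for all n, k, i: q (n+1) k - q n k = h • ((v (n+1) k + v n k)/2) and C (n+1) i - C n i = (2h/(l i)²) · ⟪∑_j a i j • ((q n j + q (n+1) j)/2), ∑_j a i j • ((v n j + v (n+1) j)/2)⟫. If the initial data are consistent, C 0 i = ‖∑_j a i j • q 0 j‖²/(l i)² for all i, then for every n and every i, C n i = ‖∑_j a i j • q n j‖²/(l i)²; i.e. the discrete kinematic condition g(qⁿ, Cⁿ) = Cⁿ - C̃(qⁿ) = 0 holds exactly at every time step. -/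
/-!
The midpoint rule preserves quadratic invariants: if `y - x = h • (u + w)/2` then
`‖y‖² - ‖x‖² = ⟪x + y, y - x⟫ = 2h ⟪(x + y)/2, (u + w)/2⟫`. Applied to the element vectors
`∑ⱼ aᵢⱼ • qⁿⱼ`, which follow the midpoint rule because the scheme is linear in `q` and `v`, this
is exactly the strain increment prescribed by the scheme, so `Cⁿ - C̃(qⁿ)` never changes.
-/

open scoped RealInnerProductSpace

section MidpointRule

variable {ι E : Type*} [Fintype ι]

theorem sum_smul_two_inv_smul_add [AddCommGroup E] [Module ℝ E] (a : ι → ℝ) (x y : ι → E) :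
    ∑ j, a j • ((2:ℝ)⁻¹ • (x j + y j)) = (2:ℝ)⁻¹ • (∑ j, a j • x j + ∑ j, a j • y j) := by
  rw [← Finset.sum_add_distrib, Finset.smul_sum]
  exact Finset.sum_congr rfl fun j _ => by module

theorem sum_smul_sub_eq_smul_midpoint [AddCommGroup E] [Module ℝ E] (a : ι → ℝ) (h : ℝ)
    {x y u w : ι → E} (hxy : ∀ j, y j - x j = h • ((2:ℝ)⁻¹ • (w j + u j))) :
    ∑ j, a j • y j - ∑ j, a j • x j = h • ((2:ℝ)⁻¹ • (∑ j, a j • w j + ∑ j, a j • u j)) := by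
  rw [← sum_smul_two_inv_smul_add, Finset.smul_sum, ← Finset.sum_sub_distrib]
  refine Finset.sum_congr rfl fun j _ => ?_
  rw [← smul_sub, hxy j, smul_comm]

theorem norm_sq_eq_of_sub_eq_smul_midpoint [NormedAddCommGroup E] [InnerProductSpace ℝ E]
    {x y u w : E} {h : ℝ} (hxy : y - x = h • ((2:ℝ)⁻¹ • (w + u))) :
    ‖y‖ ^ 2 = ‖x‖ ^ 2 + 2 * h * ⟪(2:ℝ)⁻¹ • (x + y), (2:ℝ)⁻¹ • (u + w)⟫ := by
  have hdiff : ‖y‖ ^ 2 - ‖x‖ ^ 2 = ⟪x + y, y - x⟫ := by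
    rw [inner_add_left, inner_sub_right, inner_sub_right, real_inner_self_eq_norm_sq,
      real_inner_self_eq_norm_sq, real_inner_comm x y]
    ring
  rw [hxy, add_comm w u, real_inner_smul_right, real_inner_smul_right] at hdiff
  rw [real_inner_smul_left, real_inner_smul_right]
  linarith

end MidpointRule

theorem discrete_kinematic_condition_general (N nel : ℕ) (h : ℝ)
    (a : Fin nel → Fin N → ℝ) (l : Fin nel → ℝ)
    (q v : ℕ → Fin N → EuclideanSpace ℝ (Fin 3)) (C : ℕ → Fin nel → ℝ)
    (hq : ∀ (n : ℕ) (k : Fin N),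
      q (n + 1) k - q n k = h • ((2:ℝ)⁻¹ • (v (n + 1) k + v n k)))
    (hC : ∀ (n : ℕ) (i : Fin nel),
      C (n + 1) i - C n i = (2 * h / (l i) ^ 2)
        * ⟪∑ j, a i j • ((2:ℝ)⁻¹ • (q n j + q (n + 1) j)),
           ∑ j, a i j • ((2:ℝ)⁻¹ • (v n j + v (n + 1) j))⟫)
    (h0 : ∀ i, C 0 i = ‖∑ j, a i j • q 0 j‖ ^ 2 / (l i) ^ 2) :
    ∀ (n : ℕ) (i : Fin nel), C n i = ‖∑ j, a i j • q n j‖ ^ 2 / (l i) ^ 2 := by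
  intro n
  induction n with
  | zero => exact h0
  | succ n ih =>
    intro i
    have hnorm := norm_sq_eq_of_sub_eq_smul_midpoint
      (sum_smul_sub_eq_smul_midpoint (a i) h (hq n))
    rw [eq_add_of_sub_eq (hC n i), ih i, hnorm, sum_smul_two_inv_smul_add,
      sum_smul_two_inv_smul_add]
    ring

/-- Exact preservation of the kinematic condition by the midpoint
scheme: if `qⁿ⁺¹ₖ - qⁿₖ = h • (vⁿ⁺¹ₖ + vⁿₖ)/2` and
`Cⁿ⁺¹ᵢ - Cⁿᵢ = (2h/lᵢ²)·⟪∑ⱼ aᵢⱼ • (qⁿⱼ + qⁿ⁺¹ⱼ)/2, ∑ⱼ aᵢⱼ • (vⁿⱼ + vⁿ⁺¹ⱼ)/2⟫`,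
with consistent initial data `C⁰ᵢ = ‖∑ⱼ aᵢⱼ • q⁰ⱼ‖²/lᵢ²`, then the discrete
kinematic condition `Cⁿᵢ = ‖∑ⱼ aᵢⱼ • qⁿⱼ‖²/lᵢ²` holds exactly at every step. -/
theorem discrete_kinematic_condition (N nel : ℕ) (h : ℝ)
    (a : Fin nel → Fin N → ℝ) (l : Fin nel → ℝ) (hl : ∀ i, l i ≠ 0)
    (q v : ℕ → Fin N → EuclideanSpace ℝ (Fin 3)) (C : ℕ → Fin nel → ℝ)
    (hq : ∀ (n : ℕ) (k : Fin N),
      q (n + 1) k - q n k = h • ((2:ℝ)⁻¹ • (v (n + 1) k + v n k)))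
    (hC : ∀ (n : ℕ) (i : Fin nel),
      C (n + 1) i - C n i = (2 * h / (l i) ^ 2)
        * ⟪∑ j, a i j • ((2:ℝ)⁻¹ • (q n j + q (n + 1) j)),
           ∑ j, a i j • ((2:ℝ)⁻¹ • (v n j + v (n + 1) j))⟫)
    (h0 : ∀ i, C 0 i = ‖∑ j, a i j • q 0 j‖ ^ 2 / (l i) ^ 2) :
    ∀ (n : ℕ) (i : Fin nel), C n i = ‖∑ j, a i j • q n j‖ ^ 2 / (l i) ^ 2 :=
  discrete_kinematic_condition_general N nel h a l q v C hq hC h0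
end

section
/- Directionality of the block midpoint discrete gradient of the elastodynamic Hamiltonian: let M : Matrix (Fin n) (Fin n) ℝ with Mᵀ = M, V_ext : (Fin n → ℝ) → ℝ, and f : Fin nel → ℝ → ℝ with each f i differentiable. Fix states (q⁰, v⁰, C⁰) and (q¹, v¹, C¹) with q⁰ q¹ v⁰ v¹ : Fin n → ℝ and C⁰ C¹ : Fin nel → ℝ. Let w : Fin n → ℝ be any vector satisfying the directionality condition ⟪w, q¹ - q⁰⟫ = V_ext(q¹) - V_ext(q⁰), and for each i let d i be the Greenspan discrete derivative: d i = (f i (C¹ i) - f i (C⁰ i))/(C¹ i - C⁰ i) if C¹ i ≠ C⁰ i, and d i = deriv (f i) ((C⁰ i + C¹ i)/2) otherwise. Then ⟪w, q¹ - q⁰⟫ + ⟪M.mulVec ((v⁰ + v¹)/2), v¹ - v⁰⟫ + ∑ i, d i * (C¹ i - C⁰ i) = H(q¹, v¹, C¹) - H(q⁰, v⁰, C⁰), where H(q, v, C) = (1/2)·⟪v, M.mulVec v⟫ + ∑ i, f i (C i) + V_ext(q). -/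
/-!
The discrete gradient acts block by block. For each elastic element the Greenspan quotient
times the increment `C¹ i - C⁰ i` is exactly `f i (C¹ i) - f i (C⁰ i)` (in the coincident case
both sides vanish, whatever the derivative is), and for symmetric `M` the midpoint pairing
`⟪M (v⁰ + v¹)/2, v¹ - v⁰⟫` telescopes to the difference of the kinetic energies, the cross
terms `⟪M v⁰, v¹⟫` and `⟪M v¹, v⁰⟫` cancelling. The external block is the hypothesis on `w`.
-/

open Matrix

namespace Matrix

variable {ι K : Type*} [Fintype ι]

theorem mulVec_dotProduct_of_transpose_eq [CommSemiring K] {M : Matrix ι ι K} (hM : Mᵀ = M)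
    (x y : ι → K) : M *ᵥ x ⬝ᵥ y = x ⬝ᵥ M *ᵥ y := by
  rw [dotProduct_comm, ← dotProduct_transpose_mulVec, hM]

theorem mulVec_add_dotProduct_sub [CommRing K] {M : Matrix ι ι K} (hM : Mᵀ = M)
    (v₀ v₁ : ι → K) :
    M *ᵥ (v₀ + v₁) ⬝ᵥ (v₁ - v₀) = v₁ ⬝ᵥ M *ᵥ v₁ - v₀ ⬝ᵥ M *ᵥ v₀ := by
  rw [mulVec_dotProduct_of_transpose_eq hM, add_dotProduct, mulVec_sub, dotProduct_sub,
    dotProduct_sub, ← mulVec_dotProduct_of_transpose_eq hM v₁ v₀, dotProduct_comm (M *ᵥ v₁)]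
  ring

theorem mulVec_midpoint_dotProduct_sub [Field K] {M : Matrix ι ι K} (hM : Mᵀ = M)
    (v₀ v₁ : ι → K) :
    M *ᵥ ((v₀ + v₁) / 2) ⬝ᵥ (v₁ - v₀) = 1 / 2 * (v₁ ⬝ᵥ M *ᵥ v₁) - 1 / 2 * (v₀ ⬝ᵥ M *ᵥ v₀) := by
  have hhalf : (v₀ + v₁) / 2 = (1 / 2 : K) • (v₀ + v₁) := by
    ext i
    simp [div_eq_inv_mul]
  rw [hhalf, mulVec_smul, smul_dotProduct, mulVec_add_dotProduct_sub hM, smul_eq_mul, mul_sub]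

end Matrix

section Greenspan

variable {𝕜 : Type*} [NontriviallyNormedField 𝕜] [DecidableEq 𝕜]

noncomputable def greenspanDeriv (g : 𝕜 → 𝕜) (x y : 𝕜) : 𝕜 :=
  if y ≠ x then (g y - g x) / (y - x) else deriv g ((x + y) / 2)

theorem greenspanDeriv_mul_sub (g : 𝕜 → 𝕜) (x y : 𝕜) :
    greenspanDeriv g x y * (y - x) = g y - g x := by
  by_cases h : y = x
  · simp [h]
  · rw [greenspanDeriv, if_pos h, div_mul_cancel₀ _ (sub_ne_zero.mpr h)]

end Greenspan

theorem block_discrete_gradient_directionality_general (n nel : ℕ)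
    (M : Matrix (Fin n) (Fin n) ℝ) (hM : Mᵀ = M)
    (Vext : (Fin n → ℝ) → ℝ)
    (f : Fin nel → ℝ → ℝ)
    (q0 q1 v0 v1 : Fin n → ℝ) (C0 C1 : Fin nel → ℝ)
    (w : Fin n → ℝ) (hw : w ⬝ᵥ (q1 - q0) = Vext q1 - Vext q0)
    (d : Fin nel → ℝ)
    (hd : ∀ i, d i = if C1 i ≠ C0 i
      then (f i (C1 i) - f i (C0 i)) / (C1 i - C0 i)
      else deriv (f i) ((C0 i + C1 i) / 2)) :
    w ⬝ᵥ (q1 - q0) + M.mulVec ((v0 + v1) / 2) ⬝ᵥ (v1 - v0)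
        + ∑ i, d i * (C1 i - C0 i)
      = (1 / 2 * (v1 ⬝ᵥ M.mulVec v1) + (∑ i, f i (C1 i)) + Vext q1)
        - (1 / 2 * (v0 ⬝ᵥ M.mulVec v0) + (∑ i, f i (C0 i)) + Vext q0) := by
  have hinternal : ∑ i, d i * (C1 i - C0 i) = ∑ i, f i (C1 i) - ∑ i, f i (C0 i) := by
    rw [← Finset.sum_sub_distrib]
    refine Finset.sum_congr rfl fun i _ => ?_
    rw [hd i]
    exact greenspanDeriv_mul_sub (f i) (C0 i) (C1 i)
  rw [hw, mulVec_midpoint_dotProduct_sub hM, hinternal]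
  ring

/-- Directionality of the block midpoint discrete gradient of the
elastodynamic Hamiltonian `H(q,v,C) = ½⟪v, M v⟫ + ∑ᵢ f i (Cᵢ) + V_ext(q)`:
with any `w` satisfying `⟪w, q¹ - q⁰⟫ = V_ext(q¹) - V_ext(q⁰)`, the midpoint
velocity block `M (v⁰+v¹)/2`, and the componentwise Greenspan discrete
derivatives `dᵢ`, the sum of the block pairings with the state increments
equals the exact increment of `H`. -/
theorem block_discrete_gradient_directionality (n nel : ℕ)
    (M : Matrix (Fin n) (Fin n) ℝ) (hM : Mᵀ = M)
    (Vext : (Fin n → ℝ) → ℝ)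
    (f : Fin nel → ℝ → ℝ) (hf : ∀ i, Differentiable ℝ (f i))
    (q0 q1 v0 v1 : Fin n → ℝ) (C0 C1 : Fin nel → ℝ)
    (w : Fin n → ℝ) (hw : w ⬝ᵥ (q1 - q0) = Vext q1 - Vext q0)
    (d : Fin nel → ℝ)
    (hd : ∀ i, d i = if C1 i ≠ C0 i
      then (f i (C1 i) - f i (C0 i)) / (C1 i - C0 i)
      else deriv (f i) ((C0 i + C1 i) / 2)) :
    w ⬝ᵥ (q1 - q0) + M.mulVec ((v0 + v1) / 2) ⬝ᵥ (v1 - v0)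
        + ∑ i, d i * (C1 i - C0 i)
      = (1 / 2 * (v1 ⬝ᵥ M.mulVec v1) + (∑ i, f i (C1 i)) + Vext q1)
        - (1 / 2 * (v0 ⬝ᵥ M.mulVec v0) + (∑ i, f i (C0 i)) + Vext q0) :=
  block_discrete_gradient_directionality_general n nel M hM Vext f q0 q1 v0 v1 C0 C1 w hw d hd
end

section
/- Discrete energy balance of the one-step scheme: let n m : ℕ, E : Matrix (Fin n) (Fin n) ℝ with Eᵀ = E, J : Matrix (Fin n) (Fin n) ℝ with Jᵀ = -J, B : Matrix (Fin n) (Fin m) ℝ, h : ℝ, H : (Fin n → ℝ) → ℝ, and vectors x⁰ x¹ z : Fin n → ℝ, u : Fin m → ℝ. Assume the update equation E.mulVec (x¹ - x⁰) = h • (J.mulVec z + B.mulVec u) and the discrete-gradient linking condition: Eᵀ.mulVec z = g for some g : Fin n → ℝ satisfying the directionality property ⟪g, x¹ - x⁰⟫ = H(x¹) - H(x⁰). Then H(x¹) - H(x⁰) = h · ⟪Bᵀ.mulVec z, u⟫; i.e. the discrete change of the Hamiltonian over one time step equals h times the duality pairing of the discrete collocated output y = Bᵀz with the input u. -/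
/-!
Pair the update equation with `z`. Since `Eᵀ z = g`, the left side `z ⬝ E (x¹ - x⁰)` is
`g ⬝ (x¹ - x⁰)`, which by directionality is the change of `H`; on the right the skew-symmetric
`J` does no work (`z ⬝ J z = 0`), leaving `h · z ⬝ B u = h · (Bᵀ z) ⬝ u`.
-/

open Matrix

namespace Matrix

variable {ι κ R : Type*} [Fintype ι] [Fintype κ]

theorem transpose_mulVec_dotProduct [CommSemiring R] (A : Matrix ι ι R) (z w : ι → R) :
    Aᵀ *ᵥ z ⬝ᵥ w = z ⬝ᵥ A *ᵥ w := by
  rw [mulVec_transpose, dotProduct_mulVec]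

theorem dotProduct_mulVec_self_of_transpose_eq_neg [CommRing R] [IsAddTorsionFree R]
    {J : Matrix ι ι R} (hJ : Jᵀ = -J) (z : ι → R) : z ⬝ᵥ J *ᵥ z = 0 := by
  have hneg : z ⬝ᵥ J *ᵥ z = -(z ⬝ᵥ J *ᵥ z) :=
    calc z ⬝ᵥ J *ᵥ z = Jᵀ *ᵥ z ⬝ᵥ z := (transpose_mulVec_dotProduct J z z).symm
      _ = -(z ⬝ᵥ J *ᵥ z) := by rw [hJ, neg_mulVec, neg_dotProduct, dotProduct_comm]
  exact self_eq_neg.mp hneg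

theorem dotProduct_mulVec_add_mulVec_of_transpose_eq_neg [CommRing R] [IsAddTorsionFree R]
    {J : Matrix ι ι R} (hJ : Jᵀ = -J) (B : Matrix ι κ R) (z : ι → R) (u : κ → R) :
    z ⬝ᵥ (J *ᵥ z + B *ᵥ u) = Bᵀ *ᵥ z ⬝ᵥ u := by
  rw [dotProduct_add, dotProduct_mulVec_self_of_transpose_eq_neg hJ, zero_add,
    dotProduct_mulVec, mulVec_transpose]

end Matrix

theorem discrete_energy_balance_general (n m : ℕ)
    (E : Matrix (Fin n) (Fin n) ℝ)
    (J : Matrix (Fin n) (Fin n) ℝ) (hJ : Jᵀ = -J)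
    (B : Matrix (Fin n) (Fin m) ℝ) (h : ℝ)
    (H : (Fin n → ℝ) → ℝ)
    (x0 x1 z : Fin n → ℝ) (u : Fin m → ℝ)
    (hupd : E.mulVec (x1 - x0) = h • (J.mulVec z + B.mulVec u))
    (g : Fin n → ℝ) (hlink : Eᵀ.mulVec z = g)
    (hdir : g ⬝ᵥ (x1 - x0) = H x1 - H x0) :
    H x1 - H x0 = h * (Bᵀ.mulVec z ⬝ᵥ u) := by
  calc H x1 - H x0 = z ⬝ᵥ E *ᵥ (x1 - x0) := by
        rw [← hdir, ← hlink, transpose_mulVec_dotProduct]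
    _ = h * (Bᵀ *ᵥ z ⬝ᵥ u) := by
        rw [hupd, dotProduct_smul, dotProduct_mulVec_add_mulVec_of_transpose_eq_neg hJ,
          smul_eq_mul]

/-- Discrete energy balance of the one-step scheme: if
`E (x¹ - x⁰) = h • (J z + B u)` with `E` symmetric, `J` skew-symmetric, and
`Eᵀ z = g` for a discrete gradient `g` with the directionality property
`⟪g, x¹ - x⁰⟫ = H(x¹) - H(x⁰)`, then
`H(x¹) - H(x⁰) = h·⟪Bᵀ z, u⟫`, the duality pairing of the discrete
collocated output `y = Bᵀ z` with the input `u`, times the step size. -/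
theorem discrete_energy_balance (n m : ℕ)
    (E : Matrix (Fin n) (Fin n) ℝ) (hE : Eᵀ = E)
    (J : Matrix (Fin n) (Fin n) ℝ) (hJ : Jᵀ = -J)
    (B : Matrix (Fin n) (Fin m) ℝ) (h : ℝ)
    (H : (Fin n → ℝ) → ℝ)
    (x0 x1 z : Fin n → ℝ) (u : Fin m → ℝ)
    (hupd : E.mulVec (x1 - x0) = h • (J.mulVec z + B.mulVec u))
    (g : Fin n → ℝ) (hlink : Eᵀ.mulVec z = g)
    (hdir : g ⬝ᵥ (x1 - x0) = H x1 - H x0) :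
    H x1 - H x0 = h * (Bᵀ.mulVec z ⬝ᵥ u) :=
  discrete_energy_balance_general n m E J hJ B h H x0 x1 z u hupd g hlink hdir
end

section
/- Discrete energy conservation of the time-stepping scheme without input: let E : Matrix (Fin n) (Fin n) ℝ with Eᵀ = E, J : (Fin n → ℝ) → Matrix (Fin n) (Fin n) ℝ with (J ξ)ᵀ = -(J ξ) for every ξ, h : ℝ, H : (Fin n → ℝ) → ℝ, and x : ℕ → (Fin n → ℝ) a discrete trajectory such that for each n there exists z : Fin n → ℝ with E.mulVec (x (n+1) - x n) = h • ((J ((x n + x (n+1))/2)).mulVec z) and Eᵀ.mulVec z = g for some g satisfying ⟪g, x (n+1) - x n⟫ = H(x (n+1)) - H(x n). Then H(x n) = H(x 0) for every n: the discrete Hamiltonian is exactly conserved along the discrete trajectory. -/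
/-!
Since `Eᵀ z = g`, the increment of `H` over one step is
`⟪Eᵀ z, Δx⟫ = ⟪z, E Δx⟫ = h ⟪z, J z⟫`, and the quadratic form of the skew-symmetric
matrix `J` vanishes identically. Hence `H` is constant along the trajectory.
-/

open Matrix

namespace Matrix

variable {ι κ R : Type*} [Fintype ι] [Fintype κ] [CommRing R]

theorem dotProduct_mulVec_self_eq_zero_of_transpose_eq_neg [IsAddTorsionFree R]
    {A : Matrix ι ι R} (hA : Aᵀ = -A) (z : ι → R) : z ⬝ᵥ A *ᵥ z = 0 :=
  self_eq_neg.mp <| calc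
    z ⬝ᵥ A *ᵥ z = Aᵀ *ᵥ z ⬝ᵥ z := by rw [dotProduct_mulVec, mulVec_transpose]
    _ = -(z ⬝ᵥ A *ᵥ z) := by rw [hA, neg_mulVec, neg_dotProduct, dotProduct_comm]

theorem transpose_mulVec_dotProduct_eq_zero_of_mulVec_eq_smul [IsAddTorsionFree R]
    {E : Matrix κ ι R} {A : Matrix κ κ R} (hA : Aᵀ = -A) {v : ι → R} {z : κ → R} {c : R}
    (hv : E *ᵥ v = c • A *ᵥ z) : Eᵀ *ᵥ z ⬝ᵥ v = 0 := by
  rw [mulVec_transpose, ← dotProduct_mulVec, hv, dotProduct_smul,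
    dotProduct_mulVec_self_eq_zero_of_transpose_eq_neg hA, smul_zero]

end Matrix

theorem discrete_energy_conservation_general (n : ℕ)
    (E : Matrix (Fin n) (Fin n) ℝ)
    (J : (Fin n → ℝ) → Matrix (Fin n) (Fin n) ℝ)
    (hJ : ∀ ξ : Fin n → ℝ, (J ξ)ᵀ = -(J ξ))
    (h : ℝ) (H : (Fin n → ℝ) → ℝ) (x : ℕ → (Fin n → ℝ))
    (hstep : ∀ k : ℕ, ∃ z g : Fin n → ℝ,
      E.mulVec (x (k + 1) - x k) = h • (J ((x k + x (k + 1)) / 2)).mulVec z ∧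
      Eᵀ.mulVec z = g ∧
      g ⬝ᵥ (x (k + 1) - x k) = H (x (k + 1)) - H (x k)) :
    ∀ k : ℕ, H (x k) = H (x 0) := by
  intro k
  induction k with
  | zero => rfl
  | succ k ih =>
    obtain ⟨z, g, hdyn, rfl, hgrad⟩ := hstep k
    have hbalance := transpose_mulVec_dotProduct_eq_zero_of_mulVec_eq_smul (hJ _) hdyn
    linarith

/-- Discrete energy conservation of the time-stepping scheme
without input: if for each step `k` there are an effort vector `z` and a
discrete gradient `g` with `E (xᵏ⁺¹ - xᵏ) = h • J((xᵏ + xᵏ⁺¹)/2) z`,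
`Eᵀ z = g` and `⟪g, xᵏ⁺¹ - xᵏ⟫ = H(xᵏ⁺¹) - H(xᵏ)`, then the discrete
Hamiltonian is exactly conserved: `H(xᵏ) = H(x⁰)` for every `k`. -/
theorem discrete_energy_conservation (n : ℕ)
    (E : Matrix (Fin n) (Fin n) ℝ) (hE : Eᵀ = E)
    (J : (Fin n → ℝ) → Matrix (Fin n) (Fin n) ℝ)
    (hJ : ∀ ξ : Fin n → ℝ, (J ξ)ᵀ = -(J ξ))
    (h : ℝ) (H : (Fin n → ℝ) → ℝ) (x : ℕ → (Fin n → ℝ))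
    (hstep : ∀ k : ℕ, ∃ z g : Fin n → ℝ,
      E.mulVec (x (k + 1) - x k) = h • (J ((x k + x (k + 1)) / 2)).mulVec z ∧
      Eᵀ.mulVec z = g ∧
      g ⬝ᵥ (x (k + 1) - x k) = H (x (k + 1)) - H (x k)) :
    ∀ k : ℕ, H (x k) = H (x 0) :=
  discrete_energy_conservation_general n E J hJ h H x hstep
end

section
/- Discrete conservation of angular momentum about the gravity axis: under the hypotheses of the discrete angular momentum increment identity (midpoint scheme q¹ k - q⁰ k = h • ((v⁰ k + v¹ k)/2), m k • (v¹ k - v⁰ k) = -h • (w k + ∑ i, (S̄ i * a i k/(l i)²) • (∑ j, a i j • ((q⁰ j + q¹ j)/2)))), assume additionally that the external discrete gradient is constant gravity, w k = -(m k) • b̄ for a fixed vector b̄ : Fin 3 → ℝ and all k. Then the component of the discrete total angular momentum along b̄ is exactly conserved over the step: ⟪∑ k, q¹ k ×₃ (m k • v¹ k), b̄⟫ = ⟪∑ k, q⁰ k ×₃ (m k • v⁰ k), b̄⟫. -/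
/-!
The midpoint rule turns the change of `q k ⨯₃ (m k • v k)` into the midpoint position
`q̄ k = (q⁰ k + q¹ k) / 2` crossed with the momentum increment `m k • (v¹ k - v⁰ k)`: the
remaining term `(q¹ k - q⁰ k) ⨯₃ m k v̄` vanishes because `q¹ k - q⁰ k` is parallel to
`v̄ = (v⁰ k + v¹ k) / 2`. Substituting the momentum update, the internal forces exert no total
torque, since after exchanging the sums they become `∑ i, cᵢ • (Pᵢ ⨯₃ Pᵢ)` with
`Pᵢ = ∑ j, a i j • q̄ j`, and each gravity torque `q̄ k ⨯₃ b̄` is orthogonal to `b̄`.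
-/

open Matrix

variable {R : Type*}

theorem cross_sub_cross_eq_midpoint [Field R] [NeZero (2 : R)] (x₀ x₁ y₀ y₁ : Fin 3 → R) :
    x₁ ⨯₃ y₁ - x₀ ⨯₃ y₀
      = (x₁ - x₀) ⨯₃ ((y₀ + y₁) / 2) + ((x₀ + x₁) / 2) ⨯₃ (y₁ - y₀) := by
  ext i
  fin_cases i <;> simp [cross_apply] <;> field_simp <;> ring

theorem smul_cross_smul_self [CommRing R] (r s : R) (v : Fin 3 → R) :
    (r • v) ⨯₃ (s • v) = 0 := by
  simp [cross_self]

theorem cross_smul_sub_cross_smul_of_midpoint [Field R] [NeZero (2 : R)] {h s : R}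
    {x₀ x₁ v₀ v₁ : Fin 3 → R} (hx : x₁ - x₀ = h • ((v₀ + v₁) / 2)) :
    x₁ ⨯₃ (s • v₁) - x₀ ⨯₃ (s • v₀) = ((x₀ + x₁) / 2) ⨯₃ (s • (v₁ - v₀)) := by
  have hmid : (s • v₀ + s • v₁) / 2 = s • ((v₀ + v₁) / 2) := by
    ext i; simp only [Pi.div_apply, Pi.add_apply, Pi.smul_apply, smul_eq_mul]; ring
  rw [cross_sub_cross_eq_midpoint, hx, hmid, smul_cross_smul_self, zero_add, smul_sub]

theorem sum_cross_sum_smul_sum_smul_eq_zero [CommRing R] {ι κ : Type*} [Fintype ι] [Fintype κ]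
    (x : κ → Fin 3 → R) (a : ι → κ → R) (c : ι → R) :
    ∑ k, x k ⨯₃ ∑ i, (c i * a i k) • ∑ j, a i j • x j = 0 := by
  set P : ι → Fin 3 → R := fun i => ∑ j, a i j • x j
  calc ∑ k, x k ⨯₃ ∑ i, (c i * a i k) • P i
      = ∑ k, ∑ i, c i • ((a i k • x k) ⨯₃ P i) := by
        simp only [map_sum, map_smul, LinearMap.smul_apply, smul_smul, mul_comm]
    _ = ∑ i, c i • (P i ⨯₃ P i) := by
        rw [Finset.sum_comm]
        simp only [← Finset.smul_sum, ← LinearMap.sum_apply, ← map_sum, P]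
    _ = 0 := by simp [cross_self]

theorem sum_cross_smul_dotProduct_self [CommRing R] {κ : Type*} [Fintype κ]
    (x : κ → Fin 3 → R) (s : κ → R) (b : Fin 3 → R) :
    (∑ k, x k ⨯₃ (s k • b)) ⬝ᵥ b = 0 := by
  simp [dotProduct_comm _ b, dotProduct_sum, dot_cross_self]

theorem discrete_angular_momentum_conservation_gravity_general (N nel : ℕ) (h : ℝ)
    (m : Fin N → ℝ) (a : Fin nel → Fin N → ℝ)
    (l : Fin nel → ℝ)
    (Sbar : Fin nel → ℝ) (bbar : Fin 3 → ℝ)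
    (q0 q1 v0 v1 : Fin N → (Fin 3 → ℝ))
    (hq : ∀ k : Fin N, q1 k - q0 k = h • ((v0 k + v1 k) / 2))
    (hv : ∀ k : Fin N, m k • (v1 k - v0 k)
      = -h • ((-(m k) • bbar) + ∑ i, (Sbar i * a i k / (l i) ^ 2)
          • (∑ j, a i j • ((q0 j + q1 j) / 2)))) :
    (∑ k, q1 k ⨯₃ (m k • v1 k)) ⬝ᵥ bbar
      = (∑ k, q0 k ⨯₃ (m k • v0 k)) ⬝ᵥ bbar := by
  set Q : Fin N → Fin 3 → ℝ := fun k => (q0 k + q1 k) / 2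
  have increment : ∑ k, q1 k ⨯₃ (m k • v1 k) - ∑ k, q0 k ⨯₃ (m k • v0 k)
      = ∑ k, Q k ⨯₃ (m k • (v1 k - v0 k)) := by
    rw [← Finset.sum_sub_distrib]
    exact Finset.sum_congr rfl fun k _ => cross_smul_sub_cross_smul_of_midpoint (hq k)
  have internal_torque : ∑ k, Q k ⨯₃ ∑ i, (Sbar i * a i k / l i ^ 2) • ∑ j, a i j • Q j = 0 := by
    simp only [mul_div_right_comm (Sbar _)]
    exact sum_cross_sum_smul_sum_smul_eq_zero Q a _
  have axial_torque : (∑ k, Q k ⨯₃ (m k • (v1 k - v0 k))) ⬝ᵥ bbar = 0 := by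
    have split : ∀ k, Q k ⨯₃ (m k • (v1 k - v0 k)) = -h • (Q k ⨯₃ (-(m k) • bbar)
        + Q k ⨯₃ ∑ i, (Sbar i * a i k / l i ^ 2) • ∑ j, a i j • Q j) := fun k => by
      rw [hv k, LinearMap.map_smul, map_add]
    simp only [split, ← Finset.smul_sum, Finset.sum_add_distrib, internal_torque, add_zero,
      smul_dotProduct, sum_cross_smul_dotProduct_self, smul_zero]
  rw [← sub_eq_zero, ← sub_dotProduct, increment, axial_torque]

/-- Discrete conservation of angular momentum about the gravity
axis: under the hypotheses of the discrete angular momentum increment identity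
(midpoint discrete-gradient scheme), if the external discrete gradient is
constant gravity, `wₖ = -(mₖ) • b̄`, then the component of the discrete total
angular momentum along `b̄` is exactly conserved over the step. -/
theorem discrete_angular_momentum_conservation_gravity (N nel : ℕ) (h : ℝ)
    (m : Fin N → ℝ) (a : Fin nel → Fin N → ℝ)
    (l : Fin nel → ℝ) (hl : ∀ i, l i ≠ 0)
    (Sbar : Fin nel → ℝ) (bbar : Fin 3 → ℝ)
    (q0 q1 v0 v1 : Fin N → (Fin 3 → ℝ))
    (hq : ∀ k : Fin N, q1 k - q0 k = h • ((v0 k + v1 k) / 2))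
    (hv : ∀ k : Fin N, m k • (v1 k - v0 k)
      = -h • ((-(m k) • bbar) + ∑ i, (Sbar i * a i k / (l i) ^ 2)
          • (∑ j, a i j • ((q0 j + q1 j) / 2)))) :
    (∑ k, q1 k ⨯₃ (m k • v1 k)) ⬝ᵥ bbar
      = (∑ k, q0 k ⨯₃ (m k • v0 k)) ⬝ᵥ bbar :=
  discrete_angular_momentum_conservation_gravity_general N nel h m a l Sbar bbar q0 q1 v0 v1 hq hv
end
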